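/- For all integers d, δ, a ≥ 1 and every integer m ≥ 0, one has m_d(σ^δ_m(a)) = σ^{δ/gcd(d,δ)}_m(a) in 𝒢. In particular, if gcd(d,δ) = 1 then m_d(σ^δ_m(a)) = σ^δ_m(a), and if d | δ then m_d(σ^δ_m(a)) = σ^{δ/d}_m(a). -/

import Mathlib

/-!
`T_n` is the image of the uniform distribution on `(ℤ/n)^r` under the embedding onto the
`n`-torsion `G[n]`, and the image of a uniform distribution along a homomorphism of finite
groups is the uniform distribution on its image, the fibres being cosets of the kernel. Hence
`m_d(T_n)` is uniform on `d • G[n]`. Writing `g = gcd(d, n)`, this is `G[n / g]`: multiplication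
by `g` maps `G[n]` onto `G[n / g]` since `ℝ/ℤ` is divisible, and `d / g` is invertible modulo
`n / g`. Termwise, `σ^δ_m(a)` then becomes `σ^{δ/gcd(d,δ)}_m(a)` because both
`δ / gcd(δ, k) / gcd(d, δ / gcd(δ, k))` and `δ / gcd(d, δ) / gcd(δ / gcd(d, δ), k)` equal
`δ / gcd(δ, dk)`.
-/
noncomputable section

/-- `G = (ℝ/ℤ)^r`. -/
abbrev Gr (r : ℕ) : Type := Fin r → AddCircle (1 : ℝ)

/-- The group algebra `𝒢 = ℚ[G]`. -/
abbrev GA (r : ℕ) : Type := AddMonoidAlgebra ℚ (Gr r)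

/-- The multiplication operator `m_d`, the ℚ-linear operator determined by
`m_d((θ)) = (d • θ)`. -/
noncomputable def mulOp (r : ℕ) (d : ℤ) : GA r →ₗ[ℚ] GA r :=
  (AddMonoidAlgebra.coeffLinearEquiv ℚ).symm.toLinearMap ∘ₗ
    Finsupp.lmapDomain ℚ ℚ (fun θ : Gr r => d • θ) ∘ₗ
    (AddMonoidAlgebra.coeffLinearEquiv ℚ).toLinearMap

/-- The division operator `d_{1/d}`, the ℚ-linear operator determined by
`d_{1/d}((θ)) = d^{-r} • ∑_{τ : d • τ = θ} (τ)`. -/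
noncomputable def divOp (r d : ℕ) : GA r →ₗ[ℚ] GA r :=
  (Finsupp.lsum ℚ fun θ : Gr r =>
    LinearMap.toSpanSingleton ℚ (GA r)
      (AddMonoidAlgebra.ofCoeff
        (((d : ℚ) ^ r)⁻¹ • ∑ᶠ τ ∈ {τ : Gr r | d • τ = θ}, Finsupp.single τ (1 : ℚ)))) ∘ₗ
    (AddMonoidAlgebra.coeffLinearEquiv ℚ).toLinearMap

/-- `T_n := d_{1/n}((0))`, the average of the `n`-torsion elements of `G`. -/
noncomputable def Tor (r n : ℕ) : GA r := divOp r n (AddMonoidAlgebra.ofCoeff (Finsupp.single 0 1))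

/-- The refined divisor-sum `σ^δ_m(a) := ∑_{k ∣ a} (a/k)^m • T_{δ/gcd(δ,k)}`. -/
noncomputable def sigmaRef (r δ m a : ℕ) : GA r :=
  ∑ k ∈ a.divisors, ((a / k : ℕ) : ℚ) ^ m • Tor r (δ / Nat.gcd δ k)

open Finset

section PushUniform

variable {A B G : Type*} [AddGroup A] [Fintype A] [AddGroup B] [Fintype B] [AddMonoid G]

def pushUniform (φ : A →+ G) : AddMonoidAlgebra ℚ G :=
  (Fintype.card A : ℚ)⁻¹ • ∑ a, AddMonoidAlgebra.single (φ a) 1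

theorem pushUniform_eq_average_image [DecidableEq G] (φ : A →+ G) :
    pushUniform φ =
      (#(univ.image φ) : ℚ)⁻¹ • ∑ b ∈ univ.image φ, AddMonoidAlgebra.single b 1 := by
  set k := #{a | φ a = 0}
  have hfiber : ∀ b ∈ univ.image φ, #{a | φ a = b} = k := fun b hb =>
    AddMonoidHom.card_fiber_eq_of_mem_range φ (by simpa using hb) ⟨0, map_zero φ⟩
  have hk : (k : ℚ) ≠ 0 := Nat.cast_ne_zero.2 (card_ne_zero.2 ⟨0, by simp⟩)
  have hcard : Fintype.card A = #(univ.image φ) * k := by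
    rw [← card_univ, card_eq_sum_card_image φ, sum_congr rfl hfiber, sum_const, smul_eq_mul]
  rw [pushUniform, sum_comp (fun b => AddMonoidAlgebra.single b (1 : ℚ)) φ,
    sum_congr rfl fun b hb => by rw [hfiber b hb], ← smul_sum, ← Nat.cast_smul_eq_nsmul ℚ,
    smul_smul, hcard, Nat.cast_mul, mul_inv, mul_assoc, inv_mul_cancel₀ hk, mul_one]

theorem pushUniform_congr_range {φ : A →+ G} {ψ : B →+ G} (h : Set.range φ = Set.range ψ) :
    pushUniform φ = pushUniform ψ := by
  classical
  have himage : univ.image φ = univ.image ψ := coe_injective (by simpa using h)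
  rw [pushUniform_eq_average_image, pushUniform_eq_average_image, himage]

end PushUniform

section Torsion

variable {M : Type*} [AddCommGroup M]

theorem image_nsmul_torsion_of_coprime {d n : ℕ} (h : d.Coprime n) :
    (d • ·) '' {x : M | n • x = 0} = {x | n • x = 0} := by
  refine Set.Subset.antisymm ?_ fun y (hy : n • y = 0) => ?_
  · rintro _ ⟨x, hx : n • x = 0, rfl⟩
    show n • d • x = 0
    rw [smul_comm, hx, smul_zero]
  · obtain ⟨u, v, huv⟩ := Nat.isCoprime_iff_coprime.2 h
    refine ⟨u • y, show n • u • y = 0 by rw [smul_comm, hy, smul_zero], ?_⟩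
    calc d • u • y = (u * d + v * n : ℤ) • y := by
          rw [add_zsmul, mul_zsmul, mul_zsmul, natCast_zsmul, natCast_zsmul, hy, zsmul_zero,
            add_zero, smul_comm]
      _ = y := by rw [huv, one_zsmul]

theorem image_nsmul_torsion_mul [DivisibleBy M ℤ] {g : ℕ} (hg : g ≠ 0) (n : ℕ) :
    (g • ·) '' {x : M | (n * g) • x = 0} = {x | n • x = 0} := by
  refine Set.Subset.antisymm ?_ fun y (hy : n • y = 0) => ?_
  · rintro _ ⟨x, hx : (n * g) • x = 0, rfl⟩
    rwa [mul_nsmul'] at hx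
  · have hdiv : g • DivisibleBy.div y (g : ℤ) = y := by
      rw [← natCast_zsmul, DivisibleBy.div_cancel y (Int.natCast_ne_zero.2 hg)]
    exact ⟨DivisibleBy.div y (g : ℤ), show (n * g) • _ = 0 by rw [mul_nsmul', hdiv, hy], hdiv⟩

theorem image_nsmul_torsion [DivisibleBy M ℤ] (d : ℕ) {n : ℕ} (hn : 0 < n) :
    (d • ·) '' {x : M | n • x = 0} = {x | (n / d.gcd n) • x = 0} := by
  obtain ⟨g, d', n', hg, hco, hd, hn'⟩ := Nat.exists_coprime' (Nat.gcd_pos_of_pos_right d hn)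
  have hgcd : d.gcd n = g := by
    rw [hd, hn', Nat.gcd_mul_right, hco, one_mul]
  have hsmul : (d • · : M → M) = (d' • ·) ∘ (g • ·) := by
    funext x; simp [hd, mul_nsmul']
  rw [hgcd, hn', Nat.mul_div_cancel _ hg, hsmul, Set.image_comp,
    image_nsmul_torsion_mul hg.ne', image_nsmul_torsion_of_coprime hco]

end Torsion

theorem div_gcd_div_gcd_eq_div_gcd_mul (n a b : ℕ) :
    n / n.gcd a / (n / n.gcd a).gcd b = n / n.gcd (a * b) := by
  rcases Nat.eq_zero_or_pos n with rfl | hn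
  · simp
  obtain ⟨g, n', a', hg, hco, rfl, rfl⟩ := Nat.exists_coprime' (Nat.gcd_pos_of_pos_left a hn)
  rw [Nat.gcd_mul_right, hco, one_mul, Nat.mul_div_cancel _ hg, mul_right_comm,
    Nat.gcd_mul_right, Nat.Coprime.gcd_mul_left_cancel_right b hco.symm,
    Nat.mul_div_mul_right _ _ hg]

def torsionEmb (r n : ℕ) [NeZero n] : (Fin r → ZMod n) →+ Gr r :=
  AddMonoidHom.compLeft ZMod.toAddCircle (Fin r)

theorem range_toAddCircle (n : ℕ) [NeZero n] :
    Set.range (ZMod.toAddCircle : ZMod n → UnitAddCircle) = {u | n • u = 0} := by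
  ext u
  rw [Set.mem_ofPred_eq, AddCircle.nsmul_eq_zero_iff (NeZero.pos n)]
  constructor
  · rintro ⟨j, rfl⟩
    exact ⟨j.val, j.val_lt, by rw [ZMod.toAddCircle_apply, mul_one]⟩
  · rintro ⟨m, -, rfl⟩
    exact ⟨m, by rw [ZMod.toAddCircle_natCast, mul_one]⟩

theorem range_torsionEmb (r n : ℕ) [NeZero n] :
    Set.range (torsionEmb r n) = {τ | n • τ = 0} := by
  have : ⇑(torsionEmb r n) = Pi.map fun _ => (ZMod.toAddCircle : ZMod n → UnitAddCircle) := rfl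
  rw [this, Set.range_piMap, range_toAddCircle]
  ext τ
  simp [funext_iff]

theorem torsionEmb_injective (r n : ℕ) [NeZero n] : Function.Injective (torsionEmb r n) :=
  (ZMod.toAddCircle_injective n).comp_left

theorem Tor_eq_pushUniform (r n : ℕ) [NeZero n] : Tor r n = pushUniform (torsionEmb r n) := by
  simp only [Tor, divOp, LinearMap.comp_apply, LinearEquiv.coe_coe,
    AddMonoidAlgebra.coeffLinearEquiv_apply, Finsupp.lsum_single,
    LinearMap.toSpanSingleton_apply, one_smul]
  rw [← range_torsionEmb, finsum_mem_range (torsionEmb_injective r n),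
    finsum_eq_sum_of_fintype, pushUniform]
  simp [AddMonoidAlgebra.ofCoeff_single]

theorem mulOp_single (r : ℕ) (d : ℤ) (θ : Gr r) (c : ℚ) :
    mulOp r d (AddMonoidAlgebra.single θ c) = AddMonoidAlgebra.single (d • θ) c := by
  simp [mulOp]

theorem mulOp_pushUniform (r : ℕ) (d : ℤ) {A : Type*} [AddGroup A] [Fintype A]
    (φ : A →+ Gr r) :
    mulOp r d (pushUniform φ) = pushUniform (d • φ) := by
  simp [pushUniform, mulOp_single]

theorem mulOp_Tor (r d : ℕ) {n : ℕ} (hn : 0 < n) :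
    mulOp r d (Tor r n) = Tor r (n / d.gcd n) := by
  have : NeZero n := ⟨hn.ne'⟩
  have : NeZero (n / d.gcd n) := ⟨(Nat.div_gcd_pos_of_pos_right d hn).ne'⟩
  rw [Tor_eq_pushUniform, Tor_eq_pushUniform, mulOp_pushUniform]
  apply pushUniform_congr_range
  have : ⇑((d : ℤ) • torsionEmb r n) = (d • ·) ∘ torsionEmb r n := by
    funext j; exact natCast_zsmul _ d
  rw [this, Set.range_comp, range_torsionEmb, range_torsionEmb, image_nsmul_torsion d hn]

theorem statement3_general (r : ℕ) (d δ a m : ℕ) (hδ : 1 ≤ δ) :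
    mulOp r (d : ℤ) (sigmaRef r δ m a) = sigmaRef r (δ / Nat.gcd d δ) m a ∧
    (Nat.gcd d δ = 1 → mulOp r (d : ℤ) (sigmaRef r δ m a) = sigmaRef r δ m a) ∧
    (d ∣ δ → mulOp r (d : ℤ) (sigmaRef r δ m a) = sigmaRef r (δ / d) m a) := by
  have hσ : mulOp r d (sigmaRef r δ m a) = sigmaRef r (δ / d.gcd δ) m a := by
    simp only [sigmaRef, map_sum, map_smul]
    refine sum_congr rfl fun k _ => ?_
    rw [mulOp_Tor r d (Nat.div_gcd_pos_of_pos_left k hδ), Nat.gcd_comm d,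
      div_gcd_div_gcd_eq_div_gcd_mul, Nat.gcd_comm d, div_gcd_div_gcd_eq_div_gcd_mul, mul_comm]
  exact ⟨hσ, fun h => by rw [hσ, h, Nat.div_one], fun h => by rw [hσ, Nat.gcd_eq_left h]⟩

/-- `m_d(σ^δ_m(a)) = σ^{δ/gcd(d,δ)}_m(a)`.  In particular, if `gcd(d,δ) = 1`
then `m_d(σ^δ_m(a)) = σ^δ_m(a)`, and if `d ∣ δ` then
`m_d(σ^δ_m(a)) = σ^{δ/d}_m(a)`. -/
theorem statement3 (r : ℕ) (hr : 1 ≤ r) (d δ a m : ℕ)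
    (hd : 1 ≤ d) (hδ : 1 ≤ δ) (ha : 1 ≤ a) :
    mulOp r (d : ℤ) (sigmaRef r δ m a) = sigmaRef r (δ / Nat.gcd d δ) m a ∧
    (Nat.gcd d δ = 1 → mulOp r (d : ℤ) (sigmaRef r δ m a) = sigmaRef r δ m a) ∧
    (d ∣ δ → mulOp r (d : ℤ) (sigmaRef r δ m a) = sigmaRef r (δ / d) m a) :=
  statement3_general r d δ a m hδ

end
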